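/- There exists an absolute constant κ₁ > 0 such that: for all integers q ≥ 2, N ≥ 2, g ≥ 2 and all real numbers θ_1, …, θ_{2g} satisfying the Artin-type bound and whose multiset is invariant under θ ↦ -θ, if log g > κ₁ log(Nq) then q^g · (log(7g/(N-1)))^{-3(N-1)} ≤ ∏_{l=1}^{2g} |1 - √q · e(θ_l)| ≤ q^g · (log(7g/(N-1)))^{3(N-1)}. -/

import Mathlib

open Finset

/-- `e θ = exp(2πiθ)`. -/
noncomputable def e (θ : ℝ) : ℂ := Complex.exp (2 * Real.pi * Complex.I * θ)

/-- The Artin-type bound: for every `m ≥ 1`,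
`|∑_{l=1}^{2g} e(mθ_l)| ≤ (N-1)(q^m+1)q^{-m/2}`. -/
def ArtinBound (q N g : ℕ) (θ : Fin (2 * g) → ℝ) : Prop :=
  ∀ m : ℕ, 1 ≤ m →
    ‖∑ l : Fin (2 * g), e ((m : ℝ) * θ l)‖ ≤
      ((N : ℝ) - 1) * ((q : ℝ) ^ m + 1) * (q : ℝ) ^ (-(m : ℝ) / 2)

/-!
Since `|e(θ)| = 1`, each factor satisfies `|1 - √q e(θ)| = √q |1 - r e(θ)|` with `r = q^{-1/2}`, so
the product is `q^g ∏ |1 - r e(θ_l)|`, whose logarithm is `-Re ∑_{n ≥ 1} (r^n / n) ∑_l e(nθ_l)`.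
The Artin-type bound makes the `n`-th term at most `2(N-1)/n`, and trivially it is at most
`2g r^n`. Using the first bound up to `M = ⌈3 log g⌉` and the second beyond it gives
`|log ∏ |1 - r e(θ_l)|| ≤ 2(N-1)(1 + log M) + 5`, which is below `3(N-1) log log(7g/(N-1))` once
`log g` is large compared with `log(Nq)`.
-/

lemma norm_e (θ : ℝ) : ‖e θ‖ = 1 := by
  rw [e, Complex.norm_exp]
  simp

lemma e_natCast_mul (m : ℕ) (θ : ℝ) : e (m * θ) = e θ ^ m := by
  rw [e, e, ← Complex.exp_nat_mul]
  push_cast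
  ring_nf

lemma norm_one_sub_ofReal_mul {ρ : ℝ} (hρ : ρ ≠ 0) {w : ℂ} (hw : ‖w‖ = 1) :
    ‖1 - ρ * w‖ = |ρ| * ‖1 - (ρ⁻¹ : ℝ) * w‖ := by
  have hw' : w * (starRingEnd ℂ) w = 1 := by
    rw [Complex.mul_conj, Complex.normSq_eq_norm_sq, hw]; simp
  have : 1 - ρ * w = -ρ * w * (starRingEnd ℂ) (1 - (ρ⁻¹ : ℝ) * w) := by
    simp only [map_sub, map_one, map_mul, Complex.conj_ofReal]
    have hρρ : (ρ : ℂ) * (ρ : ℂ)⁻¹ = 1 := mul_inv_cancel₀ (by exact_mod_cast hρ)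
    push_cast
    linear_combination (-(w * (starRingEnd ℂ) w)) * hρρ - hw'
  rw [this, norm_mul, norm_mul, Complex.norm_conj, hw, norm_neg, Complex.norm_real,
    Real.norm_eq_abs, mul_one]

lemma prod_norm_one_sub_sqrt_mul_e {ι : Type*} [Fintype ι] {q : ℝ} (hq : 0 < q) (θ : ι → ℝ) :
    ∏ l, ‖1 - (√q : ℂ) * e (θ l)‖ =
      √q ^ Fintype.card ι * ∏ l, ‖1 - (((√q)⁻¹ : ℝ) : ℂ) * e (θ l)‖ := by
  simp only [norm_one_sub_ofReal_mul (Real.sqrt_pos.2 hq).ne' (norm_e _), prod_mul_distrib,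
    prod_const, card_univ, abs_of_pos (Real.sqrt_pos.2 hq)]

lemma norm_one_sub_pos {z : ℂ} (hz : ‖z‖ < 1) : 0 < ‖1 - z‖ := by
  linarith [norm_sub_norm_le 1 z, norm_one (α := ℂ)]

theorem abs_log_prod_norm_one_sub_le {ι : Type*} [Fintype ι] {z : ι → ℂ} {r : ℝ} (hr0 : 0 ≤ r)
    (hr : r < 1) (hz : ∀ l, ‖z l‖ ≤ r) (M : ℕ) :
    |Real.log (∏ l, ‖1 - z l‖)| ≤
      ∑ n ∈ range M, ‖∑ l, z l ^ (n + 1)‖ / (n + 1) +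
        Fintype.card ι * r ^ (M + 1) / (1 - r) := by
  have hz1 : ∀ l, ‖z l‖ < 1 := fun l ↦ (hz l).trans_lt hr
  set s : ℕ → ℂ := fun n ↦ (∑ l, z l ^ (n + 1)) / (n + 1) with hs_def
  have hs : HasSum s (-∑ l, Complex.log (1 - z l)) := by
    simpa only [hs_def, sum_div, sum_neg_distrib] using
      hasSum_sum fun l _ ↦ Complex.hasSum_taylorSeries_neg_log' (hz1 l)
  have hs_le : ∀ n, ‖s n‖ ≤ Fintype.card ι * r ^ (n + 1) := by
    intro n
    have hn : (1 : ℝ) ≤ n + 1 := by linarith [n.cast_nonneg (α := ℝ)]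
    calc ‖s n‖ = ‖∑ l, z l ^ (n + 1)‖ / (n + 1) := by
          rw [norm_div]; norm_cast
      _ ≤ ‖∑ l, z l ^ (n + 1)‖ := div_le_self (norm_nonneg _) hn
      _ ≤ ∑ _l : ι, r ^ (n + 1) := by
          refine (norm_sum_le _ _).trans (sum_le_sum fun l _ ↦ ?_)
          rw [norm_pow]
          exact pow_le_pow_left₀ (norm_nonneg _) (hz l) _
      _ = Fintype.card ι * r ^ (n + 1) := by simp
  have hgeom : HasSum (fun n ↦ Fintype.card ι * r ^ (n + 1)) (Fintype.card ι * r / (1 - r)) := by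
    simpa [pow_succ', ← mul_assoc, div_eq_mul_inv] using
      (hasSum_geometric_of_lt_one hr0 hr).mul_left (Fintype.card ι * r)
  have hsum : Summable fun n ↦ ‖s n‖ :=
    hgeom.summable.of_nonneg_of_le (fun _ ↦ norm_nonneg _) hs_le
  have htail : ∑' n, ‖s (n + M)‖ ≤ Fintype.card ι * r ^ (M + 1) / (1 - r) := by
    have hgeomM := hgeom.mul_left (r ^ M)
    refine (hasSum_le (fun n ↦ ?_) ((summable_nat_add_iff M).2 hsum).hasSum hgeomM).trans_eq ?_
    · calc ‖s (n + M)‖ ≤ Fintype.card ι * r ^ (n + M + 1) := hs_le _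
        _ = r ^ M * (Fintype.card ι * r ^ (n + 1)) := by ring
    · ring
  calc |Real.log (∏ l, ‖1 - z l‖)| = |(∑ l, Complex.log (1 - z l)).re| := by
        simp only [Real.log_prod fun l _ ↦ (norm_one_sub_pos (hz1 l)).ne', Complex.re_sum,
          Complex.log_re]
    _ ≤ ‖∑' n, s n‖ := by rw [hs.tsum_eq, norm_neg]; exact Complex.abs_re_le_norm _
    _ ≤ ∑' n, ‖s n‖ := norm_tsum_le_tsum_norm hsum
    _ = ∑ n ∈ range M, ‖s n‖ + ∑' n, ‖s (n + M)‖ := (hsum.sum_add_tsum_nat_add M).symm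
    _ ≤ _ := by
        gcongr with n
        rw [hs_def, norm_div]
        norm_cast

lemma norm_inv_sqrt_mul_e (q θ : ℝ) : ‖(((√q)⁻¹ : ℝ) : ℂ) * e θ‖ = (√q)⁻¹ := by
  rw [norm_mul, norm_e, mul_one, Complex.norm_real, Real.norm_of_nonneg (by positivity)]

lemma norm_sum_inv_sqrt_mul_e_pow_le {ι : Type*} [Fintype ι] {q A : ℝ} (hq : 1 ≤ q)
    (hA : 0 ≤ A) {θ : ι → ℝ} {n : ℕ}
    (h : ‖∑ l, e (n * θ l)‖ ≤ A * (q ^ n + 1) * q ^ (-(n : ℝ) / 2)) :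
    ‖∑ l, ((((√q)⁻¹ : ℝ) : ℂ) * e (θ l)) ^ n‖ ≤ 2 * A := by
  have hq0 : 0 < q := by linarith
  have hrpow : q ^ (-(n : ℝ) / 2) = (√q)⁻¹ ^ n := by
    rw [Real.sqrt_eq_rpow, ← Real.rpow_neg hq0.le, ← Real.rpow_natCast, ← Real.rpow_mul hq0.le]
    ring_nf
  have hsum : ∑ l, ((((√q)⁻¹ : ℝ) : ℂ) * e (θ l)) ^ n =
      (((√q)⁻¹ ^ n : ℝ) : ℂ) * ∑ l, e (n * θ l) := by
    simp only [mul_pow, e_natCast_mul, mul_sum]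
    push_cast
    rfl
  have hqn : (q ^ n)⁻¹ ≤ 1 := inv_le_one_of_one_le₀ (one_le_pow₀ hq)
  calc ‖∑ l, ((((√q)⁻¹ : ℝ) : ℂ) * e (θ l)) ^ n‖
      ≤ (√q)⁻¹ ^ n * (A * (q ^ n + 1) * (√q)⁻¹ ^ n) := by
        rw [hsum, norm_mul, Complex.norm_real, Real.norm_of_nonneg (by positivity), ← hrpow]
        gcongr
    _ = A * (q ^ n + 1) * (q ^ n)⁻¹ := by
        have hr2 : (√q)⁻¹ ^ n * (√q)⁻¹ ^ n = (q ^ n)⁻¹ := by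
          rw [← mul_pow, ← mul_inv, Real.mul_self_sqrt hq0.le, inv_pow]
        linear_combination (A * (q ^ n + 1)) * hr2
    _ = A * (1 + (q ^ n)⁻¹) := by field_simp
    _ ≤ 2 * A := by nlinarith

theorem abs_log_prod_norm_one_sub_inv_sqrt_mul_e_le {ι : Type*} [Fintype ι] {q A : ℝ}
    (hq : 2 ≤ q) (hA : 0 ≤ A) {θ : ι → ℝ}
    (hθ : ∀ m : ℕ, 1 ≤ m → ‖∑ l, e (m * θ l)‖ ≤ A * (q ^ m + 1) * q ^ (-(m : ℝ) / 2))
    {M : ℕ} (hM : Fintype.card ι ≤ 2 * √q ^ M) :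
    |Real.log (∏ l, ‖1 - (((√q)⁻¹ : ℝ) : ℂ) * e (θ l)‖)| ≤ 2 * A * (1 + Real.log M) + 5 := by
  have hsq : 7 / 5 ≤ √q := Real.le_sqrt_of_sq_le (by linarith)
  have hr : (√q)⁻¹ < 1 := inv_lt_one_of_one_lt₀ (by linarith)
  refine (abs_log_prod_norm_one_sub_le (by positivity) hr
    (fun l ↦ (norm_inv_sqrt_mul_e q _).le) M).trans (add_le_add ?_ ?_)
  · calc ∑ n ∈ range M, ‖∑ l, ((((√q)⁻¹ : ℝ) : ℂ) * e (θ l)) ^ (n + 1)‖ / (n + 1)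
        ≤ ∑ n ∈ range M, 2 * A * ((n + 1 : ℕ) : ℝ)⁻¹ := by
          gcongr with n
          rw [div_eq_mul_inv, Nat.cast_succ]
          gcongr
          exact norm_sum_inv_sqrt_mul_e_pow_le (by linarith) hA (mod_cast hθ (n + 1) n.succ_pos)
      _ = 2 * A * harmonic M := by simp [harmonic, mul_sum]
      _ ≤ 2 * A * (1 + Real.log M) := by gcongr; exact harmonic_le_one_add_log M
  · calc Fintype.card ι * (√q)⁻¹ ^ (M + 1) / (1 - (√q)⁻¹)
        ≤ 2 * √q ^ M * (√q)⁻¹ ^ (M + 1) / (1 - (√q)⁻¹) := by gcongr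
      _ = 2 * (√q * (√q)⁻¹) ^ M * (√q)⁻¹ / (1 - (√q)⁻¹) := by ring
      _ = 2 / (√q - 1) := by
        rw [mul_inv_cancel₀ (by positivity), one_pow]
        field_simp
      _ ≤ 5 := by rw [div_le_iff₀ (by linarith)]; linarith

lemma le_sqrt_pow_ceil_three_mul_log {q y : ℝ} (hq : 2 ≤ q) (hy : 1 ≤ y) :
    y ≤ √q ^ ⌈3 * Real.log y⌉₊ := by
  have hlog2 := Real.log_two_gt_d9
  have hlogq : Real.log 2 ≤ Real.log q := Real.log_le_log (by norm_num) hq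
  have hlogy : 0 ≤ Real.log y := Real.log_nonneg hy
  have hM : 3 * Real.log y ≤ ⌈3 * Real.log y⌉₊ := Nat.le_ceil _
  rw [← Real.log_le_log_iff (by linarith) (by positivity), Real.log_pow,
    Real.log_sqrt (by linarith)]
  nlinarith

lemma log_sub_log_mul_le_log_seven_mul_div {g N q : ℝ} (hg : 0 < g) (hN : 2 ≤ N) (hq : 1 ≤ q) :
    Real.log g - Real.log (N * q) ≤ Real.log (7 * g / (N - 1)) := by
  rw [← Real.log_div hg.ne' (by positivity)]
  refine Real.log_le_log (by positivity) ?_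
  rw [div_le_div_iff₀ (by positivity) (by linarith)]
  have hgN : 0 < g * N := by positivity
  nlinarith [mul_le_mul_of_nonneg_left hq hgN.le]

lemma one_lt_log_mul {N q : ℝ} (hN : 2 ≤ N) (hq : 2 ≤ q) : 1 < Real.log (N * q) := by
  rw [Real.lt_log_iff_exp_lt (by positivity)]
  nlinarith [Real.exp_one_lt_d9]

lemma rpow_neg_le_and_le_rpow_of_abs_log_le {x L c : ℝ} (hx : 0 < x) (hL : 0 < L)
    (h : |Real.log x| ≤ c * Real.log L) : L ^ (-c) ≤ x ∧ x ≤ L ^ c := by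
  rw [Real.rpow_def_of_pos hL, Real.rpow_def_of_pos hL, ← Real.exp_log hx, Real.exp_le_exp,
    Real.exp_le_exp]
  constructor <;> linarith [abs_le.1 h]

lemma two_mul_one_add_log_add_five_le {A x M L : ℝ} (hA : 1 ≤ A) (hx : 2 ^ 18 ≤ x) (hM0 : 0 < M)
    (hM : M ≤ 4 * x) (hL : x / 2 ≤ L) :
    2 * A * (1 + Real.log M) + 5 ≤ 3 * A * Real.log L := by
  have hlog2 := Real.log_two_gt_d9
  have hlogx : 18 * Real.log 2 ≤ Real.log x := by
    simpa using Real.log_le_log (by norm_num) hx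
  have hlogM : Real.log M ≤ 2 * Real.log 2 + Real.log x := by
    have := Real.log_le_log hM0 hM
    rwa [Real.log_mul (by norm_num) (by positivity),
      show (4 : ℝ) = 2 ^ 2 by norm_num, Real.log_pow, Nat.cast_ofNat] at this
  have hlogL : Real.log x - Real.log 2 ≤ Real.log L := by
    have := Real.log_le_log (by positivity) hL
    rwa [Real.log_div (by positivity) two_ne_zero] at this
  nlinarith [mul_le_mul_of_nonneg_left hlogM (by linarith : 0 ≤ A),
    mul_le_mul_of_nonneg_left hlogL (by linarith : 0 ≤ A),
    mul_le_mul_of_nonneg_left hlogx (by linarith : 0 ≤ A)]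

theorem statement6 :
    ∃ κ₁ : ℝ, 0 < κ₁ ∧
      ∀ (q N g : ℕ) (θ : Fin (2 * g) → ℝ), 2 ≤ q → 2 ≤ N → 2 ≤ g →
        ArtinBound q N g θ →
        (∃ σ : Equiv.Perm (Fin (2 * g)), ∀ l, θ (σ l) = -θ l) →
        Real.log g > κ₁ * Real.log (N * q) →
        (q : ℝ) ^ (g : ℕ) * (Real.log (7 * g / ((N : ℝ) - 1))) ^ (-(3 * ((N : ℝ) - 1))) ≤
            (∏ l : Fin (2 * g), ‖1 - (Real.sqrt q : ℂ) * e (θ l)‖) ∧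
          (∏ l : Fin (2 * g), ‖1 - (Real.sqrt q : ℂ) * e (θ l)‖) ≤
            (q : ℝ) ^ (g : ℕ) * (Real.log (7 * g / ((N : ℝ) - 1))) ^ (3 * ((N : ℝ) - 1)) := by
  refine ⟨10 ^ 6, by norm_num, fun q N g θ hq hN hg hArtin _ hlog ↦ ?_⟩
  have hq' : (2 : ℝ) ≤ q := by exact_mod_cast hq
  have hN' : (2 : ℝ) ≤ N := by exact_mod_cast hN
  have hg' : (2 : ℝ) ≤ g := by exact_mod_cast hg
  have hx : 2 ^ 18 ≤ Real.log g := by nlinarith [one_lt_log_mul hN' hq']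
  set M := ⌈3 * Real.log g⌉₊
  have hM : (M : ℝ) < 3 * Real.log g + 1 := Nat.ceil_lt_add_one (by positivity)
  have hM0 : (0 : ℝ) < M := by exact_mod_cast Nat.ceil_pos.2 (by positivity)
  have hL : Real.log g / 2 ≤ Real.log (7 * g / (N - 1)) := by
    linarith [log_sub_log_mul_le_log_seven_mul_div (g := g) (N := N) (q := q) (by positivity) hN'
      (by linarith)]
  have hcard : (Fintype.card (Fin (2 * g)) : ℝ) ≤ 2 * √q ^ M := by
    rw [Fintype.card_fin]
    push_cast
    linarith [le_sqrt_pow_ceil_three_mul_log hq' (by linarith : (1 : ℝ) ≤ g)]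
  have hbound := (abs_log_prod_norm_one_sub_inv_sqrt_mul_e_le hq' (by linarith) hArtin hcard).trans
    (two_mul_one_add_log_add_five_le (by linarith) hx hM0 (by linarith) hL)
  have hr : (√(q : ℝ))⁻¹ < 1 := inv_lt_one_of_one_lt₀ (Real.lt_sqrt_of_sq_lt (by linarith))
  obtain ⟨hlower, hupper⟩ := rpow_neg_le_and_le_rpow_of_abs_log_le
    (prod_pos fun l _ ↦ norm_one_sub_pos ((norm_inv_sqrt_mul_e q (θ l)).trans_lt hr))
    (by linarith) hbound
  rw [prod_norm_one_sub_sqrt_mul_e (by positivity), Fintype.card_fin, pow_mul,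
    Real.sq_sqrt (by positivity)]
  exact ⟨mul_le_mul_of_nonneg_left hlower (by positivity),
    mul_le_mul_of_nonneg_left hupper (by positivity)⟩
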